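/- arXiv:1503.06900 — 7 statements merged into one kernel-verified Lean document; each statement's English description precedes it below -/
import Mathlib

section
/- In a partial geometry PaG(γ,ρ,δ), if v and v′ are two distinct adjacent points, then there are exactly γδ + ρ − γ − δ − 1 points (other than v and v′) that are adjacent to both v and v′. -/
/-- In a partial geometry PaG(γ,ρ,δ), if v and v′ are two distinct adjacent points, then
there are exactly γδ + ρ − γ − δ − 1 points (other than v and v′) adjacent to both. -/
theorem stmt_2 {Pt : Type*} [Fintype Pt] [DecidableEq Pt]
    (γ ρ δ : ℕ) (hγ : 2 ≤ γ) (hρ : 2 ≤ ρ) (hδ : 1 ≤ δ)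
    (lines : Finset (Finset Pt))
    (h1 : ∀ u v : Pt, u ≠ v → (lines.filter (fun L => u ∈ L ∧ v ∈ L)).card ≤ 1)
    (h2 : ∀ v : Pt, (lines.filter (fun L => v ∈ L)).card = γ)
    (h3 : ∀ L ∈ lines, L.card = ρ)
    (h4 : ∀ (v : Pt), ∀ L ∈ lines, v ∉ L →
      (lines.filter (fun L' => v ∈ L' ∧ ∃ w ∈ L, w ∈ L')).card = δ)
    (v v' : Pt) (hne : v ≠ v') (hadj : ∃ L ∈ lines, v ∈ L ∧ v' ∈ L) :
    (Finset.univ.filter (fun w : Pt => w ≠ v ∧ w ≠ v' ∧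
        (∃ L ∈ lines, w ∈ L ∧ v ∈ L) ∧ (∃ L ∈ lines, w ∈ L ∧ v' ∈ L))).card
      = γ * δ + ρ - γ - δ - 1 := by
  classical
  obtain ⟨L₀, hL₀, hvL₀, hv'L₀⟩ := hadj
  -- uniqueness of lines through two distinct points
  have huniq : ∀ (u w : Pt), u ≠ w → ∀ L ∈ lines, ∀ L' ∈ lines,
      u ∈ L → w ∈ L → u ∈ L' → w ∈ L' → L = L' := by
    intro u w huw L hL L' hL' hu hw hu' hw'
    by_contra hLL'
    have hsub : ({L, L'} : Finset (Finset Pt)) ⊆ lines.filter (fun X => u ∈ X ∧ w ∈ X) := by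
      intro X hX
      simp only [Finset.mem_insert, Finset.mem_singleton] at hX
      rcases hX with rfl | rfl <;> simp [Finset.mem_filter, hL, hL', hu, hw, hu', hw']
    have h2' : 2 ≤ (lines.filter (fun X => u ∈ X ∧ w ∈ X)).card := by
      have := Finset.card_le_card hsub
      rwa [Finset.card_insert_of_notMem (by simp [hLL']), Finset.card_singleton] at this
    have := h1 u w huw
    omega
  -- the set of points of a line M (with v' ∉ M) adjacent to v' has size δ
  have hA : ∀ M ∈ lines, v' ∉ M →
      (M.filter (fun w => ∃ L' ∈ lines, w ∈ L' ∧ v' ∈ L')).card = δ := by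
    intro M hM hv'M
    rw [← h4 v' M hM hv'M]
    symm
    apply Finset.card_bij
      (fun L' hL' => (Finset.mem_filter.mp hL').2.2.choose)
    · intro L' hL'
      obtain ⟨hL'lines, hv'L', hex⟩ := Finset.mem_filter.mp hL'
      have hspec := hex.choose_spec
      exact Finset.mem_filter.mpr ⟨hspec.1, L', hL'lines, hspec.2, hv'L'⟩
    · intro L₁ hL₁ L₂ hL₂ heq
      obtain ⟨hL₁l, hv'L₁, hex₁⟩ := Finset.mem_filter.mp hL₁
      obtain ⟨hL₂l, hv'L₂, hex₂⟩ := Finset.mem_filter.mp hL₂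
      have hs₁ := hex₁.choose_spec
      have hs₂ := hex₂.choose_spec
      have hwv' : hex₁.choose ≠ v' := fun h => hv'M (h ▸ hs₁.1)
      exact huniq _ v' hwv' L₁ hL₁l L₂ hL₂l hs₁.2 hv'L₁ (heq ▸ hs₂.2) hv'L₂
    · intro w hw
      obtain ⟨hwM, L', hL'l, hwL', hv'L'⟩ := Finset.mem_filter.mp hw
      have hmem : L' ∈ lines.filter (fun L' => v' ∈ L' ∧ ∃ x ∈ M, x ∈ L') :=
        Finset.mem_filter.mpr ⟨hL'l, hv'L', w, hwM, hwL'⟩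
      refine ⟨L', hmem, ?_⟩
      -- the chosen intersection point equals w
      have hspec := (Finset.mem_filter.mp hmem).2.2.choose_spec
      set z := (Finset.mem_filter.mp hmem).2.2.choose with hz
      by_contra hzw
      -- z ≠ w, both in M and L' ⇒ M = L', contradiction with v' ∉ M
      have : M = L' := huniq w z (fun h => hzw (h ▸ rfl)) M hM L' hL'l hwM hspec.1 hwL' hspec.2
      exact hv'M (this ▸ hv'L')
  -- the lines through v other than L₀
  set T : Finset (Finset Pt) := lines.filter (fun M => v ∈ M ∧ M ≠ L₀) with hTdef
  have hT : T.card = γ - 1 := by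
    have hTe : T = (lines.filter (fun M => v ∈ M)).erase L₀ := by
      ext M
      simp only [hTdef, Finset.mem_filter, Finset.mem_erase]
      tauto
    rw [hTe, Finset.card_erase_of_mem (Finset.mem_filter.mpr ⟨hL₀, hvL₀⟩), h2 v]
  -- basic facts about lines in T
  have hTfacts : ∀ M ∈ T, M ∈ lines ∧ v ∈ M ∧ v' ∉ M := by
    intro M hM
    obtain ⟨hMl, hvM, hMne⟩ := Finset.mem_filter.mp hM
    refine ⟨hMl, hvM, fun hv'M => hMne ?_⟩
    exact huniq v v' hne M hMl L₀ hL₀ hvM hv'M hvL₀ hv'L₀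
  -- the contribution of each line M ∈ T
  set f : Finset Pt → Finset Pt :=
    fun M => M.filter (fun w => w ≠ v ∧ ∃ L' ∈ lines, w ∈ L' ∧ v' ∈ L') with hfdef
  have hfcard : ∀ M ∈ T, (f M).card = δ - 1 := by
    intro M hM
    obtain ⟨hMl, hvM, hv'M⟩ := hTfacts M hM
    have hfe : f M = (M.filter (fun w => ∃ L' ∈ lines, w ∈ L' ∧ v' ∈ L')).erase v := by
      ext w
      simp only [hfdef, Finset.mem_filter, Finset.mem_erase]
      tauto
    have hvmem : v ∈ M.filter (fun w => ∃ L' ∈ lines, w ∈ L' ∧ v' ∈ L') :=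
      Finset.mem_filter.mpr ⟨hvM, L₀, hL₀, hvL₀, hv'L₀⟩
    rw [hfe, Finset.card_erase_of_mem hvmem, hA M hMl hv'M]
  -- points of f M are not on L₀
  have hf_not_L₀ : ∀ M ∈ T, ∀ w ∈ f M, w ∉ L₀ := by
    intro M hM w hw hwL₀
    obtain ⟨hMl, hvM, _⟩ := hTfacts M hM
    obtain ⟨hwM, hwv, _⟩ := Finset.mem_filter.mp hw
    have hMne := (Finset.mem_filter.mp hM).2.2
    exact hMne (huniq v w (Ne.symm hwv) M hMl L₀ hL₀ hvM hwM hvL₀ hwL₀)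
  -- the decomposition of the target set
  set S₁ : Finset Pt := L₀ \ {v, v'} with hS₁def
  have hSeq : (Finset.univ.filter (fun w : Pt => w ≠ v ∧ w ≠ v' ∧
      (∃ L ∈ lines, w ∈ L ∧ v ∈ L) ∧ (∃ L ∈ lines, w ∈ L ∧ v' ∈ L)))
      = S₁ ∪ T.biUnion f := by
    ext w
    simp only [Finset.mem_filter, Finset.mem_univ, true_and, Finset.mem_union,
      hS₁def, Finset.mem_sdiff, Finset.mem_insert, Finset.mem_singleton,
      Finset.mem_biUnion]
    constructor
    · rintro ⟨hwv, hwv', ⟨L, hL, hwL, hvL⟩, hadj'⟩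
      by_cases hwL₀ : w ∈ L₀
      · exact Or.inl ⟨hwL₀, by tauto⟩
      · refine Or.inr ⟨L, ?_, ?_⟩
        · refine Finset.mem_filter.mpr ⟨hL, hvL, fun h => hwL₀ (h ▸ hwL)⟩
        · exact Finset.mem_filter.mpr ⟨hwL, hwv, hadj'⟩
    · rintro (⟨hwL₀, hw⟩ | ⟨M, hM, hw⟩)
      · push_neg at hw
        exact ⟨hw.1, hw.2, ⟨L₀, hL₀, hwL₀, hvL₀⟩, ⟨L₀, hL₀, hwL₀, hv'L₀⟩⟩
      · obtain ⟨hMl, hvM, hv'M⟩ := hTfacts M hM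
        obtain ⟨hwM, hwv, hadj'⟩ := Finset.mem_filter.mp hw
        refine ⟨hwv, fun h => hv'M (h ▸ hwM), ⟨M, hMl, hwM, hvM⟩, hadj'⟩
  -- disjointness
  have hdisj : Disjoint S₁ (T.biUnion f) := by
    rw [Finset.disjoint_left]
    intro w hwS₁ hwB
    obtain ⟨M, hM, hwf⟩ := Finset.mem_biUnion.mp hwB
    exact hf_not_L₀ M hM w hwf (Finset.mem_sdiff.mp hwS₁).1
  have hpair : ∀ M ∈ T, ∀ M' ∈ T, M ≠ M' → Disjoint (f M) (f M') := by
    intro M hM M' hM' hMM'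
    rw [Finset.disjoint_left]
    intro w hw hw'
    obtain ⟨hMl, hvM, _⟩ := hTfacts M hM
    obtain ⟨hM'l, hvM', _⟩ := hTfacts M' hM'
    obtain ⟨hwM, hwv, _⟩ := Finset.mem_filter.mp hw
    obtain ⟨hwM', _, _⟩ := Finset.mem_filter.mp hw'
    exact hMM' (huniq v w (Ne.symm hwv) M hMl M' hM'l hvM hwM hvM' hwM')
  -- cardinalities
  have hS₁card : S₁.card = ρ - 2 := by
    have hsub : ({v, v'} : Finset Pt) ⊆ L₀ := by
      intro x hx
      simp only [Finset.mem_insert, Finset.mem_singleton] at hx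
      rcases hx with rfl | rfl <;> assumption
    rw [hS₁def, Finset.card_sdiff_of_subset hsub, h3 L₀ hL₀,
      Finset.card_insert_of_notMem (by simp [hne]), Finset.card_singleton]
  rw [hSeq, Finset.card_union_of_disjoint hdisj, Finset.card_biUnion hpair, hS₁card,
    Finset.sum_congr rfl hfcard, Finset.sum_const, hT, smul_eq_mul]
  obtain ⟨a, rfl⟩ : ∃ a, γ = a + 2 := ⟨γ - 2, by omega⟩
  obtain ⟨b, rfl⟩ : ∃ b, δ = b + 1 := ⟨δ - 1, by omega⟩
  have hexp : (a + 2) * (b + 1) = a * b + a + 2 * b + 2 := by ring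
  have hexp2 : (a + 2 - 1) * (b + 1 - 1) = a * b + b := by
    simp; ring
  omega
end

section
/- Let γ ≥ 2, ρ ≥ 2, m = γ² and n = γρ, and let H be an m×n binary matrix that is a γ×ρ array of γ×γ circulant permutation matrices and that satisfies the RC-constraint. Take the n column indices of H as points and, for each row index i, let the line L_i be the set of column indices j with H(i,j) = 1. Then this point–line system is a partial geometry PaG(γ,ρ,ρ−1): any two distinct points are on at most one common line, each point is on exactly γ lines, each line contains exactly ρ points, and for every point v not on a line L_i there are exactly ρ−1 lines passing through v and through a point of L_i. -/
section Aux

variable {γ ρ : ℕ} [NeZero γ]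

private lemma stmt6_two_le {α : Type*} {t : Finset α} {x y : α}
    (hx : x ∈ t) (hy : y ∈ t) (hxy : x ≠ y) : 2 ≤ t.card :=
  Finset.one_lt_card.2 ⟨x, hx, y, hy, hxy⟩

/-- Key consequence of the RC constraint: for distinct block columns `j ≠ j'`,
the map `i ↦ s i j - s i j'` is a bijection `Fin γ → ZMod γ`. -/
private lemma stmt6_bij (s : Fin γ → Fin ρ → ZMod γ)
    (hRC : ∀ r r' : Fin γ × ZMod γ, r ≠ r' →
      (Finset.univ.filter (fun c : Fin ρ × ZMod γ =>
        c.2 = r.2 + s r.1 c.1 ∧ c.2 = r'.2 + s r'.1 c.1)).card ≤ 1)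
    {j j' : Fin ρ} (hjj : j ≠ j') :
    Function.Bijective (fun i : Fin γ => s i j - s i j') := by
  rw [Fintype.bijective_iff_injective_and_card]
  refine ⟨?_, by simp [ZMod.card]⟩
  intro i1 i2 h
  simp only at h
  by_contra hne
  have hrr : ((i1, (0 : ZMod γ)) : Fin γ × ZMod γ) ≠ (i2, s i1 j - s i2 j) := by
    simp [Prod.ext_iff]; intro h'; exact absurd h' hne
  have h2 : (Finset.univ.filter
      (fun c : Fin ρ × ZMod γ => c.2 = (0 : ZMod γ) + s i1 c.1 ∧
        c.2 = (s i1 j - s i2 j) + s i2 c.1)).card ≤ 1 :=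
    hRC (i1, (0 : ZMod γ)) (i2, s i1 j - s i2 j) hrr
  have hc1 : ((j, s i1 j) : Fin ρ × ZMod γ) ∈ Finset.univ.filter
      (fun c : Fin ρ × ZMod γ => c.2 = (0 : ZMod γ) + s i1 c.1 ∧
        c.2 = (s i1 j - s i2 j) + s i2 c.1) := by
    simp only [Finset.mem_filter, Finset.mem_univ, true_and]
    constructor <;> ring
  have hc2 : ((j', s i1 j') : Fin ρ × ZMod γ) ∈ Finset.univ.filter
      (fun c : Fin ρ × ZMod γ => c.2 = (0 : ZMod γ) + s i1 c.1 ∧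
        c.2 = (s i1 j - s i2 j) + s i2 c.1) := by
    simp only [Finset.mem_filter, Finset.mem_univ, true_and]
    constructor
    · ring
    · linear_combination -h
  have := stmt6_two_le hc1 hc2 (by simp [Prod.ext_iff]; intro h'; exact absurd h' hjj)
  omega

end Aux

/-- An RC-constrained γ×ρ array of γ×γ circulant permutation matrices (rows indexed by
`Fin γ × ZMod γ`, columns by `Fin ρ × ZMod γ`; the CPM in block (i,j) has shift `s i j`,
so entry ((i,a),(j,b)) is 1 iff b = a + s i j) is the line-point adjacency matrix of a
partial geometry PaG(γ,ρ,ρ−1): points are the columns, and the line of row r is the set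
of columns where row r has a 1. -/
theorem stmt_6 (γ ρ : ℕ) [NeZero γ] (hγ : 2 ≤ γ) (hρ : 2 ≤ ρ)
    (s : Fin γ → Fin ρ → ZMod γ)
    (hRC : ∀ r r' : Fin γ × ZMod γ, r ≠ r' →
      (Finset.univ.filter (fun c : Fin ρ × ZMod γ =>
        c.2 = r.2 + s r.1 c.1 ∧ c.2 = r'.2 + s r'.1 c.1)).card ≤ 1) :
    (∀ c c' : Fin ρ × ZMod γ, c ≠ c' →
      (Finset.univ.filter (fun r : Fin γ × ZMod γ =>
        c.2 = r.2 + s r.1 c.1 ∧ c'.2 = r.2 + s r.1 c'.1)).card ≤ 1)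
    ∧ (∀ c : Fin ρ × ZMod γ,
      (Finset.univ.filter (fun r : Fin γ × ZMod γ => c.2 = r.2 + s r.1 c.1)).card = γ)
    ∧ (∀ r : Fin γ × ZMod γ,
      (Finset.univ.filter (fun c : Fin ρ × ZMod γ => c.2 = r.2 + s r.1 c.1)).card = ρ)
    ∧ (∀ (c : Fin ρ × ZMod γ) (r : Fin γ × ZMod γ), ¬ (c.2 = r.2 + s r.1 c.1) →
      (Finset.univ.filter (fun r' : Fin γ × ZMod γ => c.2 = r'.2 + s r'.1 c.1 ∧
        ∃ c' : Fin ρ × ZMod γ, c'.2 = r.2 + s r.1 c'.1 ∧ c'.2 = r'.2 + s r'.1 c'.1)).card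
        = ρ - 1) := by
  refine ⟨?_, ?_, ?_, ?_⟩
  · -- any two points on at most one common line
    intro c c' hcc
    rw [Finset.card_le_one]
    intro r hr r' hr'
    simp only [Finset.mem_filter, Finset.mem_univ, true_and] at hr hr'
    by_contra hne
    have h1 := hRC r r' hne
    have hc1 : c ∈ Finset.univ.filter (fun c : Fin ρ × ZMod γ =>
        c.2 = r.2 + s r.1 c.1 ∧ c.2 = r'.2 + s r'.1 c.1) := by
      simp only [Finset.mem_filter, Finset.mem_univ, true_and]
      exact ⟨hr.1, hr'.1⟩
    have hc2 : c' ∈ Finset.univ.filter (fun c : Fin ρ × ZMod γ =>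
        c.2 = r.2 + s r.1 c.1 ∧ c.2 = r'.2 + s r'.1 c.1) := by
      simp only [Finset.mem_filter, Finset.mem_univ, true_and]
      exact ⟨hr.2, hr'.2⟩
    have := stmt6_two_le hc1 hc2 hcc
    omega
  · -- each point on exactly γ lines
    intro c
    have := Finset.card_bij' (s := Finset.univ.filter
        (fun r : Fin γ × ZMod γ => c.2 = r.2 + s r.1 c.1))
        (t := (Finset.univ : Finset (Fin γ)))
        (fun r _ => r.1) (fun i _ => (i, c.2 - s i c.1))
        (fun r hr => Finset.mem_univ _)
        (fun i hi => by
          simp only [Finset.mem_filter, Finset.mem_univ, true_and]; ring)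
        (fun r hr => by
          simp only [Finset.mem_filter, Finset.mem_univ, true_and] at hr
          ext
          · rfl
          · simp only [hr]; ring)
        (fun i hi => rfl)
    simpa using this
  · -- each line has exactly ρ points
    intro r
    have := Finset.card_bij' (s := Finset.univ.filter
        (fun c : Fin ρ × ZMod γ => c.2 = r.2 + s r.1 c.1))
        (t := (Finset.univ : Finset (Fin ρ)))
        (fun c _ => c.1) (fun j _ => (j, r.2 + s r.1 j))
        (fun c hc => Finset.mem_univ _)
        (fun j hj => by
          simp only [Finset.mem_filter, Finset.mem_univ, true_and])
        (fun c hc => by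
          simp only [Finset.mem_filter, Finset.mem_univ, true_and] at hc
          ext
          · rfl
          · simp only [hc])
        (fun j hj => rfl)
    simpa using this
  · -- connecting lines: exactly ρ - 1
    intro c r hcr
    -- for j ≠ c.1, pick the block row i' joining c to the point (j, r.2 + s r.1 j) of L_r
    have key : ∀ j : Fin ρ, j ≠ c.1 → ∀ z : ZMod γ,
        ∃! i' : Fin γ, s i' c.1 - s i' j = z := by
      intro j hj z
      exact (stmt6_bij s hRC (Ne.symm hj)).existsUnique z
    have hmain := Finset.card_bij
        (s := (Finset.univ : Finset (Fin ρ)).erase c.1)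
        (t := Finset.univ.filter (fun r' : Fin γ × ZMod γ =>
          c.2 = r'.2 + s r'.1 c.1 ∧
          ∃ c' : Fin ρ × ZMod γ, c'.2 = r.2 + s r.1 c'.1 ∧ c'.2 = r'.2 + s r'.1 c'.1))
        (fun j hj =>
          ((key j (Finset.ne_of_mem_erase hj) (c.2 - (r.2 + s r.1 j))).exists.choose,
            c.2 - s ((key j (Finset.ne_of_mem_erase hj) (c.2 - (r.2 + s r.1 j))).exists.choose) c.1))
        ?_ ?_ ?_
    · rw [hmain.symm, Finset.card_erase_of_mem (Finset.mem_univ _)]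
      simp
    · -- maps into the filter
      intro j hj
      set i' := (key j (Finset.ne_of_mem_erase hj) (c.2 - (r.2 + s r.1 j))).exists.choose with hi'
      have hspec : s i' c.1 - s i' j = c.2 - (r.2 + s r.1 j) :=
        (key j (Finset.ne_of_mem_erase hj) (c.2 - (r.2 + s r.1 j))).exists.choose_spec
      simp only [Finset.mem_filter, Finset.mem_univ, true_and]
      refine ⟨by ring, (j, r.2 + s r.1 j), rfl, ?_⟩
      simp only
      linear_combination hspec
    · -- injective
      intro j1 hj1 j2 hj2 heq
      by_contra hne
      set i1 := (key j1 (Finset.ne_of_mem_erase hj1) (c.2 - (r.2 + s r.1 j1))).exists.choose with hi1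
      have hspec1 : s i1 c.1 - s i1 j1 = c.2 - (r.2 + s r.1 j1) :=
        (key j1 (Finset.ne_of_mem_erase hj1) (c.2 - (r.2 + s r.1 j1))).exists.choose_spec
      set i2 := (key j2 (Finset.ne_of_mem_erase hj2) (c.2 - (r.2 + s r.1 j2))).exists.choose with hi2
      have hspec2 : s i2 c.1 - s i2 j2 = c.2 - (r.2 + s r.1 j2) :=
        (key j2 (Finset.ne_of_mem_erase hj2) (c.2 - (r.2 + s r.1 j2))).exists.choose_spec
      rw [Prod.ext_iff] at heq
      obtain ⟨he1, he2⟩ := heq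
      simp only [← hi1, ← hi2] at he1 he2
      -- the row r' := (i1, c.2 - s i1 c.1) is distinct from r and meets r twice
      have hrne : r ≠ (i1, c.2 - s i1 c.1) := by
        intro h
        apply hcr
        rw [h]
        simp only
        ring
      have h1 : (Finset.univ.filter
          (fun c' : Fin ρ × ZMod γ => c'.2 = r.2 + s r.1 c'.1 ∧
            c'.2 = (c.2 - s i1 c.1) + s i1 c'.1)).card ≤ 1 :=
        hRC r (i1, c.2 - s i1 c.1) hrne
      have hm1 : ((j1, r.2 + s r.1 j1) : Fin ρ × ZMod γ) ∈ Finset.univ.filter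
          (fun c' : Fin ρ × ZMod γ => c'.2 = r.2 + s r.1 c'.1 ∧
            c'.2 = (c.2 - s i1 c.1) + s i1 c'.1) := by
        simp only [Finset.mem_filter, Finset.mem_univ, true_and]
        linear_combination hspec1
      have hm2 : ((j2, r.2 + s r.1 j2) : Fin ρ × ZMod γ) ∈ Finset.univ.filter
          (fun c' : Fin ρ × ZMod γ => c'.2 = r.2 + s r.1 c'.1 ∧
            c'.2 = (c.2 - s i1 c.1) + s i1 c'.1) := by
        simp only [Finset.mem_filter, Finset.mem_univ, true_and]
        rw [he1]
        linear_combination hspec2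
      have := stmt6_two_le hm1 hm2 (by simp [Prod.ext_iff]; intro h'; exact absurd h' hne)
      omega
    · -- surjective
      intro r' hr'
      simp only [Finset.mem_filter, Finset.mem_univ, true_and] at hr'
      obtain ⟨hcon, c', hc'1, hc'2⟩ := hr'
      have hjne : c'.1 ≠ c.1 := by
        intro h
        apply hcr
        have : c'.2 = c.2 := by rw [hc'2, hcon, h]
        rw [← this, hc'1, h]
      refine ⟨c'.1, Finset.mem_erase.2 ⟨hjne, Finset.mem_univ _⟩, ?_⟩
      set i' := (key c'.1 hjne (c.2 - (r.2 + s r.1 c'.1))).exists.choose with hi'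
      have hspec : s i' c.1 - s i' c'.1 = c.2 - (r.2 + s r.1 c'.1) :=
        (key c'.1 hjne (c.2 - (r.2 + s r.1 c'.1))).exists.choose_spec
      have huniq : i' = r'.1 := by
        have h2 : s r'.1 c.1 - s r'.1 c'.1 = c.2 - (r.2 + s r.1 c'.1) := by
          linear_combination -hcon + hc'2 - hc'1
        exact (stmt6_bij s hRC (Ne.symm hjne)).injective (by
          show s i' c.1 - s i' c'.1 = s r'.1 c.1 - s r'.1 c'.1
          rw [hspec, h2])
      show ((i', c.2 - s i' c.1) : Fin γ × ZMod γ) = r'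
      rw [Prod.ext_iff]
      refine ⟨huniq, ?_⟩
      show c.2 - s i' c.1 = r'.2
      rw [huniq]
      linear_combination hcon
end

section
/- Let F be a field and β ∈ F an element of multiplicative order t, where t is prime. Then for all integers 0 ≤ i < i′ < t and 0 ≤ j < j′ < t, the 2×2 matrix with rows (β^{ij}, β^{ij′}) and (β^{i′j}, β^{i′j′}) is nonsingular, i.e., β^{ij}·β^{i′j′} ≠ β^{ij′}·β^{i′j}. -/
/-- Let F be a field and β ∈ F an element of multiplicative order t, with t prime.
Then every 2×2 submatrix of the base matrix B_c = [β^{ij}] is nonsingular. -/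
theorem stmt_10 {F : Type*} [Field F] (t : ℕ) (ht : t.Prime) (β : F)
    (hβt : β ^ t = 1) (hβ : ∀ s : ℕ, 1 ≤ s → s < t → β ^ s ≠ 1) :
    ∀ i i' j j' : ℕ, i < i' → i' < t → j < j' → j' < t →
      β ^ (i * j) * β ^ (i' * j') ≠ β ^ (i * j') * β ^ (i' * j) := by
  intro i i' j j' hii hi't hjj hj't heq
  have hβ0 : β ≠ 0 := by
    intro h
    rw [h, zero_pow ht.ne_zero] at hβt
    exact zero_ne_one hβt
  have hord : orderOf β = t := by
    have hdvd : orderOf β ∣ t := orderOf_dvd_of_pow_eq_one hβt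
    rcases (Nat.Prime.eq_one_or_self_of_dvd ht _ hdvd) with h1 | h
    · exfalso
      have : β = 1 := orderOf_eq_one_iff.mp h1
      exact hβ 1 le_rfl ht.one_lt (by simpa using this)
    · exact h
  set a := i' - i with ha
  set b := j' - j with hb
  have hab : i * j + i' * j' = (i * j' + i' * j) + a * b := by
    have h1 : i ≤ i' := le_of_lt hii
    have h2 : j ≤ j' := le_of_lt hjj
    zify [h1, h2, ha, hb]
    ring
  have hone : β ^ (a * b) = 1 := by
    have : β ^ (i * j' + i' * j) * β ^ (a * b) = β ^ (i * j' + i' * j) * 1 := by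
      rw [mul_one, ← pow_add, ← hab, pow_add]
      rw [pow_add]; exact heq
    exact mul_left_cancel₀ (pow_ne_zero _ hβ0) this
  have hdvd : t ∣ a * b := hord ▸ orderOf_dvd_of_pow_eq_one hone
  have ha0 : 0 < a := Nat.sub_pos_of_lt hii
  have hb0 : 0 < b := Nat.sub_pos_of_lt hjj
  have hat : a < t := lt_of_le_of_lt (Nat.sub_le _ _) hi't
  have hbt : b < t := lt_of_le_of_lt (Nat.sub_le _ _) hj't
  rcases (Nat.Prime.dvd_mul ht).mp hdvd with h | h
  · exact absurd (Nat.le_of_dvd ha0 h) (not_le.mpr hat)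
  · exact absurd (Nat.le_of_dvd hb0 h) (not_le.mpr hbt)
end

section
/- Let G be a bipartite graph with girth at least 6 in which every left vertex (variable node) has degree γ. If Δ is a set of κ left vertices with κ < γ, and τ is the number of right vertices (check nodes) adjacent to an odd number of vertices of Δ, then τ ≥ (γ + 1 − κ)·κ. -/
/-- Let G be a bipartite graph (VNs `V`, CNs `C`, adjacency `E`) with girth at least 6
(any two distinct VNs have at most one common CN neighbor) in which every VN has degree
γ.  If Δ is a set of κ VNs with κ < γ and τ is the number of CNs adjacent to an odd
number of vertices of Δ, then τ ≥ (γ + 1 − κ)·κ. -/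
theorem stmt_12 {V C : Type*} [Fintype V] [Fintype C] [DecidableEq V]
    (E : V → C → Prop) [∀ v c, Decidable (E v c)]
    (γ : ℕ)
    (hgirth : ∀ v v' : V, v ≠ v' →
      (Finset.univ.filter (fun c : C => E v c ∧ E v' c)).card ≤ 1)
    (hdeg : ∀ v : V, (Finset.univ.filter (fun c : C => E v c)).card = γ)
    (Δ : Finset V) (κ : ℕ) (hκ : Δ.card = κ) (hκγ : κ < γ) :
    (γ + 1 - κ) * κ ≤
      (Finset.univ.filter (fun c : C => Odd ((Δ.filter (fun v => E v c)).card))).card := by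
  classical
  set S : V → Finset C :=
    fun v => Finset.univ.filter (fun c : C => E v c ∧ ∀ v' ∈ Δ, E v' c → v' = v) with hS
  have key : ∀ v ∈ Δ, γ + 1 - κ ≤ (S v).card := by
    intro v hv
    have hκpos : 1 ≤ κ := hκ ▸ Finset.card_pos.mpr ⟨v, hv⟩
    have hsplit : Finset.univ.filter (fun c : C => E v c) ⊆
        S v ∪ (Δ.erase v).biUnion
          (fun v' => Finset.univ.filter (fun c : C => E v c ∧ E v' c)) := by
      intro c hc
      simp only [Finset.mem_filter, Finset.mem_univ, true_and] at hc
      by_cases h : ∀ v' ∈ Δ, E v' c → v' = v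
      · exact Finset.mem_union_left _ (by simp only [hS, Finset.mem_filter, Finset.mem_univ, true_and]; exact ⟨hc, h⟩)
      · push_neg at h
        obtain ⟨v', hv', hE, hne⟩ := h
        exact Finset.mem_union_right _ (Finset.mem_biUnion.mpr
          ⟨v', Finset.mem_erase.mpr ⟨hne, hv'⟩, by simp [hc, hE]⟩)
    have hb : ((Δ.erase v).biUnion
        (fun v' => Finset.univ.filter (fun c : C => E v c ∧ E v' c))).card ≤ κ - 1 := by
      calc ((Δ.erase v).biUnion
            (fun v' => Finset.univ.filter (fun c : C => E v c ∧ E v' c))).card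
          ≤ ∑ v' ∈ Δ.erase v, (Finset.univ.filter (fun c : C => E v c ∧ E v' c)).card :=
            Finset.card_biUnion_le
        _ ≤ ∑ _v' ∈ Δ.erase v, 1 := Finset.sum_le_sum (fun v' hv' =>
            hgirth v v' (Ne.symm (Finset.mem_erase.mp hv').1))
        _ = κ - 1 := by
            rw [Finset.sum_const, smul_eq_mul, mul_one, Finset.card_erase_of_mem hv, hκ]
    have h1 := (Finset.card_le_card hsplit).trans (Finset.card_union_le _ _)
    rw [hdeg v] at h1
    omega
  have hsub : ∀ v ∈ Δ, S v ⊆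
      Finset.univ.filter (fun c : C => Odd ((Δ.filter (fun v => E v c)).card)) := by
    intro v hv c hc
    simp only [hS, Finset.mem_filter, Finset.mem_univ, true_and] at hc ⊢
    have heq : Δ.filter (fun v' => E v' c) = {v} := by
      ext v'
      simp only [Finset.mem_filter, Finset.mem_singleton]
      constructor
      · rintro ⟨h1, h2⟩; exact hc.2 v' h1 h2
      · rintro rfl; exact ⟨hv, hc.1⟩
    rw [heq]; simp
  have hdisj : ∀ v ∈ Δ, ∀ v' ∈ Δ, v ≠ v' → Disjoint (S v) (S v') := by
    intro v hv v' hv' hne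
    rw [Finset.disjoint_left]
    intro c hc hc'
    simp only [hS, Finset.mem_filter, Finset.mem_univ, true_and] at hc hc'
    exact hne (hc'.2 v hv hc.1)
  calc (γ + 1 - κ) * κ = ∑ _v ∈ Δ, (γ + 1 - κ) := by
        rw [Finset.sum_const, smul_eq_mul, hκ, mul_comm]
    _ ≤ ∑ v ∈ Δ, (S v).card := Finset.sum_le_sum key
    _ = (Δ.biUnion S).card := (Finset.card_biUnion hdisj).symm
    _ ≤ _ := Finset.card_le_card (Finset.biUnion_subset.mpr hsub)
end

section
/- Let Δ be a set of κ points of a partial geometry PaG(γ,ρ,δ) with κ ≤ γ. For each i ≥ 1 let m_i be the number of lines containing exactly i points of Δ, and let τ = Σ_{i odd} m_i be the number of lines containing an odd number of points of Δ. Then τ ≥ (γ + 1 − κ)·κ + Σ_{i odd} (i−1)²·m_i + Σ_{i even, i ≥ 2} i·(i−2)·m_i. -/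
/-- Per-line arithmetic identity. -/
lemma stmt_13_key (c : ℕ) :
    (if Odd c then (c - 1) ^ 2 else 0) + (if Even c ∧ 2 ≤ c then c * (c - 2) else 0) + c
      = (if Odd c then 1 else 0) + (c * c - c) := by
  rcases Nat.even_or_odd c with hc | hc
  · have hnotodd : ¬ Odd c := by simpa [Nat.not_odd_iff_even] using hc
    rw [if_neg hnotodd, if_neg hnotodd]
    rcases le_or_gt 2 c with h2 | h2
    · rw [if_pos ⟨hc, h2⟩]
      have hcc : c ≤ c * c := Nat.le_mul_of_pos_left c (by omega)
      zify [h2, hcc]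
      ring
    · rw [if_neg (fun h => absurd h.2 (by omega))]
      interval_cases c
      · simp
      · exact absurd hc (by decide)
  · have h1 : 1 ≤ c := hc.pos
    have hnot2 : ¬ (Even c ∧ 2 ≤ c) := fun h => (Nat.not_even_iff_odd.mpr hc) h.1
    rw [if_pos hc, if_pos hc, if_neg hnot2]
    have hcc : c ≤ c * c := Nat.le_mul_of_pos_left c (by omega)
    zify [h1, hcc]
    ring

/-- Let Δ be a set of κ points of a partial geometry PaG(γ,ρ,δ) with κ ≤ γ, let m_i be
the number of lines containing exactly i points of Δ, and let τ be the number of lines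
containing an odd number of points of Δ.  Then
τ ≥ (γ+1−κ)κ + Σ_{i odd} (i−1)²·m_i + Σ_{i even, i≥2} i(i−2)·m_i. -/
theorem stmt_13 {Pt : Type*} [Fintype Pt] [DecidableEq Pt]
    (γ ρ δ : ℕ) (hγ : 2 ≤ γ) (hρ : 2 ≤ ρ) (hδ : 1 ≤ δ)
    (lines : Finset (Finset Pt))
    (h1 : ∀ u v : Pt, u ≠ v → (lines.filter (fun L => u ∈ L ∧ v ∈ L)).card ≤ 1)
    (h2 : ∀ v : Pt, (lines.filter (fun L => v ∈ L)).card = γ)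
    (h3 : ∀ L ∈ lines, L.card = ρ)
    (h4 : ∀ (v : Pt), ∀ L ∈ lines, v ∉ L →
      (lines.filter (fun L' => v ∈ L' ∧ ∃ w ∈ L, w ∈ L')).card = δ)
    (Δ : Finset Pt) (κ : ℕ) (hκ : Δ.card = κ) (hκγ : κ ≤ γ) :
    (γ + 1 - κ) * κ
      + (∑ i ∈ Finset.range (κ + 1), if Odd i then
          (i - 1) ^ 2 * (lines.filter (fun L => (L ∩ Δ).card = i)).card else 0)
      + (∑ i ∈ Finset.range (κ + 1), if Even i ∧ 2 ≤ i then
          i * (i - 2) * (lines.filter (fun L => (L ∩ Δ).card = i)).card else 0)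
    ≤ (lines.filter (fun L => Odd ((L ∩ Δ).card))).card := by
  classical
  have hmap : ∀ L ∈ lines, (L ∩ Δ).card ∈ Finset.range (κ + 1) := by
    intro L _
    simp only [Finset.mem_range, Nat.lt_succ_iff]
    calc (L ∩ Δ).card ≤ Δ.card := Finset.card_le_card Finset.inter_subset_right
      _ = κ := hκ
  -- fiberwise conversion
  have fiber : ∀ g : ℕ → ℕ,
      ∑ i ∈ Finset.range (κ + 1), g i * (lines.filter (fun L => (L ∩ Δ).card = i)).card
        = ∑ L ∈ lines, g ((L ∩ Δ).card) := by
    intro g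
    rw [← Finset.sum_fiberwise_of_maps_to hmap (fun L => g ((L ∩ Δ).card))]
    refine Finset.sum_congr rfl fun i _ => Eq.symm ?_
    calc ∑ L ∈ lines.filter (fun L => (L ∩ Δ).card = i), g ((L ∩ Δ).card)
        = ∑ L ∈ lines.filter (fun L => (L ∩ Δ).card = i), g i :=
          Finset.sum_congr rfl fun L hL => by rw [(Finset.mem_filter.mp hL).2]
      _ = g i * (lines.filter (fun L => (L ∩ Δ).card = i)).card := by
          rw [Finset.sum_const, smul_eq_mul, mul_comm]
  -- express A and B as sums over lines
  have hA : (∑ i ∈ Finset.range (κ + 1), if Odd i then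
        (i - 1) ^ 2 * (lines.filter (fun L => (L ∩ Δ).card = i)).card else 0)
      = ∑ L ∈ lines, (if Odd ((L ∩ Δ).card) then ((L ∩ Δ).card - 1) ^ 2 else 0) := by
    rw [← fiber (fun i => if Odd i then (i - 1) ^ 2 else 0)]
    refine Finset.sum_congr rfl fun i _ => ?_
    split <;> simp
  have hB : (∑ i ∈ Finset.range (κ + 1), if Even i ∧ 2 ≤ i then
        i * (i - 2) * (lines.filter (fun L => (L ∩ Δ).card = i)).card else 0)
      = ∑ L ∈ lines, (if Even ((L ∩ Δ).card) ∧ 2 ≤ (L ∩ Δ).card then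
          (L ∩ Δ).card * ((L ∩ Δ).card - 2) else 0) := by
    rw [← fiber (fun i => if Even i ∧ 2 ≤ i then i * (i - 2) else 0)]
    refine Finset.sum_congr rfl fun i _ => ?_
    split <;> simp
  -- τ as a sum over lines
  have hT : (lines.filter (fun L => Odd ((L ∩ Δ).card))).card
      = ∑ L ∈ lines, (if Odd ((L ∩ Δ).card) then 1 else 0) :=
    Finset.card_filter _ _
  -- first count: ∑ |L ∩ Δ| = γ κ
  have hS1 : ∑ L ∈ lines, (L ∩ Δ).card = γ * κ := by
    have step : ∀ L : Finset Pt, (L ∩ Δ).card = ∑ v ∈ Δ, if v ∈ L then 1 else 0 := by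
      intro L
      rw [← Finset.card_filter]
      congr 1
      rw [Finset.filter_mem_eq_inter, Finset.inter_comm]
    calc ∑ L ∈ lines, (L ∩ Δ).card
        = ∑ L ∈ lines, ∑ v ∈ Δ, if v ∈ L then 1 else 0 :=
          Finset.sum_congr rfl fun L _ => step L
      _ = ∑ v ∈ Δ, ∑ L ∈ lines, if v ∈ L then 1 else 0 := Finset.sum_comm
      _ = ∑ v ∈ Δ, (lines.filter (fun L => v ∈ L)).card :=
          Finset.sum_congr rfl fun v _ => (Finset.card_filter _ _).symm
      _ = ∑ v ∈ Δ, γ := Finset.sum_congr rfl fun v _ => h2 v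
      _ = γ * κ := by rw [Finset.sum_const, smul_eq_mul, hκ, mul_comm]
  -- second count: ∑ |L∩Δ|(|L∩Δ|-1) ≤ κ(κ-1)
  have hS2 : ∑ L ∈ lines, ((L ∩ Δ).card * (L ∩ Δ).card - (L ∩ Δ).card) ≤ κ * κ - κ := by
    have step : ∀ L : Finset Pt,
        (L ∩ Δ).card * (L ∩ Δ).card - (L ∩ Δ).card
          = ∑ p ∈ Δ.offDiag, if p.1 ∈ L ∧ p.2 ∈ L then 1 else 0 := by
      intro L
      rw [← Finset.offDiag_card, ← Finset.card_filter]
      congr 1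
      ext p
      simp only [Finset.mem_offDiag, Finset.mem_filter, Finset.mem_inter]
      tauto
    calc ∑ L ∈ lines, ((L ∩ Δ).card * (L ∩ Δ).card - (L ∩ Δ).card)
        = ∑ L ∈ lines, ∑ p ∈ Δ.offDiag, if p.1 ∈ L ∧ p.2 ∈ L then 1 else 0 :=
          Finset.sum_congr rfl fun L _ => step L
      _ = ∑ p ∈ Δ.offDiag, ∑ L ∈ lines, if p.1 ∈ L ∧ p.2 ∈ L then 1 else 0 :=
          Finset.sum_comm
      _ = ∑ p ∈ Δ.offDiag, (lines.filter (fun L => p.1 ∈ L ∧ p.2 ∈ L)).card :=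
          Finset.sum_congr rfl fun p _ => (Finset.card_filter _ _).symm
      _ ≤ ∑ p ∈ Δ.offDiag, 1 := Finset.sum_le_sum fun p hp =>
          h1 p.1 p.2 (Finset.mem_offDiag.mp hp).2.2
      _ = Δ.offDiag.card := by rw [Finset.sum_const, smul_eq_mul, mul_one]
      _ = κ * κ - κ := by rw [Finset.offDiag_card, hκ]
  -- main identity from summing the per-line key identity
  have heq : (∑ L ∈ lines, (if Odd ((L ∩ Δ).card) then ((L ∩ Δ).card - 1) ^ 2 else 0))
      + (∑ L ∈ lines, (if Even ((L ∩ Δ).card) ∧ 2 ≤ (L ∩ Δ).card then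
          (L ∩ Δ).card * ((L ∩ Δ).card - 2) else 0))
      + γ * κ
      = (∑ L ∈ lines, (if Odd ((L ∩ Δ).card) then 1 else 0))
        + ∑ L ∈ lines, ((L ∩ Δ).card * (L ∩ Δ).card - (L ∩ Δ).card) := by
    rw [← hS1, ← Finset.sum_add_distrib, ← Finset.sum_add_distrib,
        ← Finset.sum_add_distrib]
    exact Finset.sum_congr rfl fun L _ => stmt_13_key _
  rw [hA, hB, hT]
  have hsub : (γ + 1 - κ) * κ = γ * κ + κ - κ * κ := by
    rw [Nat.sub_mul, add_mul, one_mul]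
  rw [hsub]
  have hQP : κ * κ ≤ γ * κ := Nat.mul_le_mul_right κ hκγ
  have hκQ : κ ≤ κ * κ := by
    rcases Nat.eq_zero_or_pos κ with h | h
    · simp [h]
    · exact Nat.le_mul_of_pos_left κ h
  have hfinal : ∀ P Q A B T S : ℕ, A + B + P = T + S → S ≤ Q - κ → κ ≤ Q → Q ≤ P →
      (P + κ - Q) + A + B ≤ T := by
    intro P Q A B T S e1 e2 e3 e4
    omega
  exact hfinal (γ * κ) (κ * κ) _ _ _ _ heq (by omega) hκQ hQP
end

section
/- Let PaG(γ,ρ,γ−1) be a net and let L_0, L_1, …, L_{ρ−1} be a parallel bundle, i.e., ρ pairwise disjoint lines (which then partition the point set). Let Δ be a set of κ points, set κ_i = |Δ ∩ L_i| for 0 ≤ i < ρ, and let τ be the number of lines of the geometry containing an odd number of points of Δ. Then τ ≥ (γ−1)κ − κ² + Σ_{i=0}^{ρ−1} κ_i² + |{ i : 0 ≤ i < ρ and κ_i is odd }|. -/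
open Finset

section Aux
variable {Pt : Type*} [Fintype Pt] [DecidableEq Pt]

/-- two distinct lines meet in at most one point -/
lemma aux_meet (lines : Finset (Finset Pt))
    (h1 : ∀ u v : Pt, u ≠ v → (lines.filter (fun L => u ∈ L ∧ v ∈ L)).card ≤ 1)
    {L M : Finset Pt} (hL : L ∈ lines) (hM : M ∈ lines) (hne : L ≠ M) :
    (L ∩ M).card ≤ 1 := by
  rw [Finset.card_le_one]
  intro a ha b hb
  by_contra hab
  have hsub : ({L, M} : Finset (Finset Pt)) ⊆ lines.filter (fun N => a ∈ N ∧ b ∈ N) := by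
    intro N hN
    simp only [Finset.mem_insert, Finset.mem_singleton] at hN
    simp only [Finset.mem_inter] at ha hb
    rcases hN with rfl | rfl <;> simp [Finset.mem_filter, hL, hM, ha.1, ha.2, hb.1, hb.2]
  have h2 := Finset.card_le_card hsub
  rw [Finset.card_pair hne] at h2
  have := h1 a b hab
  omega

end Aux

set_option linter.unusedSectionVars false

section Aux2
variable {Pt : Type*} [Fintype Pt] [DecidableEq Pt]

/-- sum over lines through a point v not on L of |M ∩ L| equals δ -/
lemma aux_row (lines : Finset (Finset Pt)) (δ : ℕ)
    (h1 : ∀ u v : Pt, u ≠ v → (lines.filter (fun L => u ∈ L ∧ v ∈ L)).card ≤ 1)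
    (h4 : ∀ (v : Pt), ∀ L ∈ lines, v ∉ L →
      (lines.filter (fun L' => v ∈ L' ∧ ∃ w ∈ L, w ∈ L')).card = δ)
    {L : Finset Pt} (hL : L ∈ lines) {v : Pt} (hv : v ∉ L) :
    ∑ M ∈ lines.filter (fun M => v ∈ M), (M ∩ L).card = δ := by
  have key : ∀ M ∈ lines.filter (fun M => v ∈ M),
      (M ∩ L).card = if (∃ w ∈ L, w ∈ M) then 1 else 0 := by
    intro M hM
    rw [Finset.mem_filter] at hM
    have hne : M ≠ L := by rintro rfl; exact hv hM.2
    split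
    · next h =>
      obtain ⟨w, hwL, hwM⟩ := h
      have h1' := aux_meet lines h1 hM.1 hL hne
      have h2 : 0 < (M ∩ L).card := Finset.card_pos.2 ⟨w, Finset.mem_inter.2 ⟨hwM, hwL⟩⟩
      omega
    · next h =>
      rw [Finset.card_eq_zero, Finset.eq_empty_iff_forall_notMem]
      intro w hw
      rw [Finset.mem_inter] at hw
      exact h ⟨w, hw.2, hw.1⟩
  rw [Finset.sum_congr rfl key, ← Finset.card_filter, Finset.filter_filter]
  exact h4 v L hL hv

/-- total incidence count between lines and a point set -/
lemma aux_col (lines : Finset (Finset Pt)) (γ : ℕ)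
    (h2 : ∀ v : Pt, (lines.filter (fun L => v ∈ L)).card = γ)
    (S : Finset Pt) :
    ∑ M ∈ lines, (M ∩ S).card = S.card * γ := by
  have key : ∀ M ∈ lines, (M ∩ S).card = ∑ u ∈ S, if u ∈ M then 1 else 0 := by
    intro M _
    rw [← Finset.card_filter]
    congr 1
    ext u
    simp [Finset.mem_inter, Finset.mem_filter, and_comm]
  rw [Finset.sum_congr rfl key, Finset.sum_comm]
  have : ∀ u ∈ S, (∑ M ∈ lines, if u ∈ M then 1 else 0) = γ := by
    intro u _
    rw [← Finset.card_filter]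
    exact h2 u
  rw [Finset.sum_congr rfl this, Finset.sum_const, smul_eq_mul]

end Aux2

section Aux3
variable {Pt : Type*} [Fintype Pt] [DecidableEq Pt]

lemma aux_cardPt (γ ρ δ : ℕ) (hγ : 2 ≤ γ) (hδ : 1 ≤ δ)
    (lines : Finset (Finset Pt))
    (h1 : ∀ u v : Pt, u ≠ v → (lines.filter (fun L => u ∈ L ∧ v ∈ L)).card ≤ 1)
    (h2 : ∀ v : Pt, (lines.filter (fun L => v ∈ L)).card = γ)
    (h3 : ∀ L ∈ lines, L.card = ρ)
    (h4 : ∀ (v : Pt), ∀ L ∈ lines, v ∉ L →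
      (lines.filter (fun L' => v ∈ L' ∧ ∃ w ∈ L, w ∈ L')).card = δ)
    (hnet : δ = γ - 1)
    {L : Finset Pt} (hL : L ∈ lines) :
    Fintype.card Pt = ρ * ρ := by
  have hLcard : L.card = ρ := h3 L hL
  -- E1 : the big double count, grouped by points off L
  have step : ∀ M ∈ lines, (M ∩ L).card * (M \ L).card
      = ∑ w ∈ Finset.univ \ L, if w ∈ M then (M ∩ L).card else 0 := by
    intro M _
    have hfil : (Finset.univ \ L).filter (fun w => w ∈ M) = M \ L := by
      ext w
      simp only [Finset.mem_filter, Finset.mem_sdiff, Finset.mem_univ, true_and]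
      tauto
    rw [← Finset.sum_filter, hfil, Finset.sum_const, smul_eq_mul, mul_comm]
  have E1 : ∑ M ∈ lines, (M ∩ L).card * (M \ L).card
      = (Finset.univ \ L).card * δ := by
    rw [Finset.sum_congr rfl step, Finset.sum_comm]
    have inner : ∀ w ∈ Finset.univ \ L,
        (∑ M ∈ lines, if w ∈ M then (M ∩ L).card else 0) = δ := by
      intro w hw
      rw [Finset.mem_sdiff] at hw
      rw [← Finset.sum_filter]
      exact aux_row lines δ h1 h4 hL hw.2
    rw [Finset.sum_congr rfl inner, Finset.sum_const, smul_eq_mul]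
  -- E2 : grouped by lines
  have e2term : ∀ M ∈ lines.erase L, (M ∩ L).card * (M \ L).card
      = (M ∩ L).card * (ρ - 1) := by
    intro M hM
    rw [Finset.mem_erase] at hM
    have h01 := aux_meet lines h1 hM.2 hL hM.1
    have hsp : (M ∩ L).card + (M \ L).card = M.card := Finset.card_inter_add_card_sdiff M L
    have hMc : M.card = ρ := h3 M hM.2
    interval_cases h : (M ∩ L).card
    · simp
    · simp only [one_mul]; omega
  have hLterm : (L ∩ L).card * (L \ L).card = 0 := by simp
  have E2 : ∑ M ∈ lines, (M ∩ L).card * (M \ L).card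
      = (∑ M ∈ lines.erase L, (M ∩ L).card) * (ρ - 1) := by
    rw [← Finset.add_sum_erase lines _ hL, hLterm, zero_add,
      Finset.sum_congr rfl e2term, ← Finset.sum_mul]
  have hsum_erase : (∑ M ∈ lines.erase L, (M ∩ L).card) + ρ = ρ * γ := by
    have := aux_col lines γ h2 L
    rw [← Finset.add_sum_erase lines _ hL] at this
    have hll : (L ∩ L).card = ρ := by rw [Finset.inter_self]; exact hLcard
    rw [hll, hLcard] at this
    omega
  -- combine
  obtain ⟨g, hg⟩ : ∃ g, γ = g + 1 := ⟨γ - 1, by omega⟩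
  have hδg : δ = g := by omega
  have hg1 : 1 ≤ g := by omega
  have hsum_val : (∑ M ∈ lines.erase L, (M ∩ L).card) = ρ * g := by
    have : ρ * γ = ρ * g + ρ := by rw [hg]; ring
    omega
  have hcNρ : (Finset.univ \ L).card + ρ = Fintype.card Pt := by
    have := Finset.card_sdiff_add_card_eq_card (Finset.subset_univ L)
    rw [hLcard] at this
    simpa using this
  have key : (Finset.univ \ L).card * g = (ρ * (ρ - 1)) * g := by
    have := E1.symm.trans E2
    rw [hsum_val, hδg] at this
    calc (Finset.univ \ L).card * g = ρ * g * (ρ - 1) := this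
      _ = (ρ * (ρ - 1)) * g := by ring
  have hc : (Finset.univ \ L).card = ρ * (ρ - 1) :=
    Nat.eq_of_mul_eq_mul_right (by omega) key
  have hρ1 : ρ * (ρ - 1) + ρ = ρ * ρ := by
    cases ρ with
    | zero => simp
    | succ n => simp [Nat.succ_sub_one]; ring
  omega

end Aux3

/-- Let PaG(γ,ρ,γ−1) be a net and L_0,…,L_{ρ−1} a parallel bundle (ρ pairwise disjoint
lines).  For a set Δ of κ points, with κ_i = |Δ ∩ L_i| and τ the number of lines of the
geometry containing an odd number of points of Δ,
τ ≥ (γ−1)κ − κ² + Σ_i κ_i² + #{ i : κ_i odd }. -/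
theorem stmt_14 {Pt : Type*} [Fintype Pt] [DecidableEq Pt]
    (γ ρ δ : ℕ) (hγ : 2 ≤ γ) (hρ : 2 ≤ ρ) (hδ : 1 ≤ δ)
    (lines : Finset (Finset Pt))
    (h1 : ∀ u v : Pt, u ≠ v → (lines.filter (fun L => u ∈ L ∧ v ∈ L)).card ≤ 1)
    (h2 : ∀ v : Pt, (lines.filter (fun L => v ∈ L)).card = γ)
    (h3 : ∀ L ∈ lines, L.card = ρ)
    (h4 : ∀ (v : Pt), ∀ L ∈ lines, v ∉ L →
      (lines.filter (fun L' => v ∈ L' ∧ ∃ w ∈ L, w ∈ L')).card = δ)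
    (hnet : δ = γ - 1)
    (Lb : Fin ρ → Finset Pt) (hLb : ∀ i, Lb i ∈ lines)
    (hdisj : ∀ i j : Fin ρ, i ≠ j → Disjoint (Lb i) (Lb j))
    (Δ : Finset Pt) (κ : ℕ) (hκ : Δ.card = κ) :
    ((γ : ℤ) - 1) * κ - (κ : ℤ) ^ 2
        + ∑ i : Fin ρ, ((Δ ∩ Lb i).card : ℤ) ^ 2
        + ((Finset.univ.filter (fun i : Fin ρ => Odd ((Δ ∩ Lb i).card))).card : ℤ)
      ≤ ((lines.filter (fun L => Odd ((L ∩ Δ).card))).card : ℤ) := by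
  have hρ0 : 0 < ρ := by omega
  have hN : Fintype.card Pt = ρ * ρ :=
    aux_cardPt γ ρ δ hγ hδ lines h1 h2 h3 h4 hnet (hLb ⟨0, hρ0⟩)
  -- Lb is injective
  have hinj : ∀ i ∈ (Finset.univ : Finset (Fin ρ)), ∀ j ∈ Finset.univ,
      Lb i = Lb j → i = j := by
    intro i _ j _ h
    by_contra hne
    have hd := hdisj i j hne
    rw [h, disjoint_self] at hd
    have := h3 (Lb j) (hLb j)
    rw [hd] at this
    simp at this
    omega
  -- bundle covers all points
  have hcover : Finset.univ.biUnion Lb = (Finset.univ : Finset Pt) := by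
    apply Finset.eq_univ_of_card
    rw [Finset.card_biUnion (fun i _ j _ hij => hdisj i j hij)]
    have : ∀ i ∈ (Finset.univ : Finset (Fin ρ)), (Lb i).card = ρ :=
      fun i _ => h3 (Lb i) (hLb i)
    rw [Finset.sum_congr rfl this, Finset.sum_const, smul_eq_mul,
      Finset.card_univ, Fintype.card_fin, hN]
  have hsumκ : ∑ i : Fin ρ, (Δ ∩ Lb i).card = κ := by
    have hbu : Finset.univ.biUnion (fun i => Δ ∩ Lb i) = Δ := by
      ext x
      simp only [Finset.mem_biUnion, Finset.mem_inter, Finset.mem_univ, true_and]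
      constructor
      · rintro ⟨i, hx, _⟩; exact hx
      · intro hx
        have : x ∈ Finset.univ.biUnion Lb := hcover ▸ Finset.mem_univ x
        rw [Finset.mem_biUnion] at this
        obtain ⟨i, _, hi⟩ := this
        exact ⟨i, hx, hi⟩
    have hcb : ∑ i : Fin ρ, (Δ ∩ Lb i).card
        = (Finset.univ.biUnion (fun i => Δ ∩ Lb i)).card := by
      rw [Finset.card_biUnion]
      intro i _ j _ hij
      exact Finset.disjoint_of_subset_left Finset.inter_subset_right
        (Finset.disjoint_of_subset_right Finset.inter_subset_right (hdisj i j hij))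
    rw [hcb, hbu, hκ]
  -- incidence count
  have hA : ∑ L ∈ lines, (L ∩ Δ).card = κ * γ := by
    rw [← hκ]; exact aux_col lines γ h2 Δ
  -- pair count
  have hQ : ∑ L ∈ lines, (L ∩ Δ).offDiag.card ≤ Δ.offDiag.card := by
    have hoff : ∀ L ∈ lines, (L ∩ Δ).offDiag.card
        = ∑ p ∈ Δ.offDiag, if p.1 ∈ L ∧ p.2 ∈ L then 1 else 0 := by
      intro L _
      rw [← Finset.card_filter]
      congr 1
      ext ⟨a, b⟩
      simp only [Finset.mem_offDiag, Finset.mem_filter, Finset.mem_inter]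
      tauto
    rw [Finset.sum_congr rfl hoff, Finset.sum_comm]
    calc ∑ p ∈ Δ.offDiag, ∑ L ∈ lines, (if p.1 ∈ L ∧ p.2 ∈ L then 1 else 0)
        ≤ ∑ _p ∈ Δ.offDiag, 1 := by
          apply Finset.sum_le_sum
          intro p hp
          rw [← Finset.card_filter]
          exact h1 p.1 p.2 (Finset.mem_offDiag.1 hp).2.2
      _ = Δ.offDiag.card := by rw [Finset.sum_const, smul_eq_mul, mul_one]
  -- cast offDiag cards
  have cast1 : ∀ s : Finset Pt, ((s.offDiag.card : ℤ)) = (s.card : ℤ) ^ 2 - s.card := by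
    intro s
    rw [Finset.offDiag_card]
    have h : s.card ≤ s.card * s.card := by nlinarith [Nat.zero_le s.card]
    push_cast [Nat.cast_sub h]
    ring
  -- the bundle as a finset of lines
  set B : Finset (Finset Pt) := Finset.univ.image Lb with hBdef
  have hB : B ⊆ lines := by
    intro L hL
    rw [hBdef, Finset.mem_image] at hL
    obtain ⟨i, _, rfl⟩ := hL
    exact hLb i
  -- sums over B
  have ZB1 : ∑ L ∈ B, ((L ∩ Δ).card : ℤ) = κ := by
    rw [hBdef, Finset.sum_image hinj]
    have : ∀ i ∈ (Finset.univ : Finset (Fin ρ)),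
        ((Lb i ∩ Δ).card : ℤ) = ((Δ ∩ Lb i).card : ℤ) := by
      intro i _; rw [Finset.inter_comm]
    rw [Finset.sum_congr rfl this, ← Nat.cast_sum, hsumκ]
  have ZB2 : ∑ L ∈ B, ((L ∩ Δ).card : ℤ) ^ 2 = ∑ i : Fin ρ, ((Δ ∩ Lb i).card : ℤ) ^ 2 := by
    rw [hBdef, Finset.sum_image hinj]
    apply Finset.sum_congr rfl
    intro i _; rw [Finset.inter_comm]
  have ZBodd : ∑ L ∈ B, (if Odd ((L ∩ Δ).card) then (1 : ℤ) else 0)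
      = ((Finset.univ.filter (fun i : Fin ρ => Odd ((Δ ∩ Lb i).card))).card : ℤ) := by
    rw [hBdef, Finset.sum_image hinj, Finset.card_filter]
    push_cast
    apply Finset.sum_congr rfl
    intro i _; rw [Finset.inter_comm]
  -- τ as a sum
  have hτ : ((lines.filter (fun L => Odd ((L ∩ Δ).card))).card : ℤ)
      = ∑ L ∈ lines, (if Odd ((L ∩ Δ).card) then (1 : ℤ) else 0) := by
    rw [Finset.card_filter]; push_cast; rfl
  -- pointwise bound off the bundle
  have hpt : ∀ L ∈ lines \ B,
      2 * ((L ∩ Δ).card : ℤ) - ((L ∩ Δ).card : ℤ) ^ 2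
        ≤ (if Odd ((L ∩ Δ).card) then (1 : ℤ) else 0) := by
    intro L _
    set c := (L ∩ Δ).card with hc
    rcases Nat.even_or_odd c with he | ho
    · rw [if_neg (by simpa [Nat.not_odd_iff_even] using he)]
      have : c = 0 ∨ 2 ≤ c := by
        obtain ⟨k, hk⟩ := he; omega
      rcases this with h | h
      · rw [h]; norm_num
      · have : (2 : ℤ) ≤ (c : ℤ) := by exact_mod_cast h
        nlinarith
    · rw [if_pos ho]
      have h1c : 1 ≤ c := Nat.one_le_iff_ne_zero.2 (by
        intro h0; rw [h0] at ho; simp at ho)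
      have : (1 : ℤ) ≤ (c : ℤ) := by exact_mod_cast h1c
      nlinarith [sq_nonneg ((c : ℤ) - 1)]
  -- sums split into bundle and rest
  have hsplit : ∀ f : Finset Pt → ℤ,
      ∑ L ∈ lines \ B, f L = ∑ L ∈ lines, f L - ∑ L ∈ B, f L := by
    intro f
    rw [← Finset.sum_sdiff hB]
    ring
  -- integer versions of the global counts
  have ZA : ∑ L ∈ lines, ((L ∩ Δ).card : ℤ) = (κ : ℤ) * γ := by
    rw [← Nat.cast_sum, hA]; push_cast; ring
  have ZQ : ∑ L ∈ lines, (((L ∩ Δ).card : ℤ) ^ 2 - ((L ∩ Δ).card : ℤ))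
      ≤ (κ : ℤ) ^ 2 - κ := by
    have : ∀ L ∈ lines, (((L ∩ Δ).card : ℤ) ^ 2 - ((L ∩ Δ).card : ℤ))
        = (((L ∩ Δ).offDiag.card : ℕ) : ℤ) := by
      intro L _; rw [cast1]
    rw [Finset.sum_congr rfl this, ← Nat.cast_sum]
    calc ((∑ L ∈ lines, (L ∩ Δ).offDiag.card : ℕ) : ℤ)
        ≤ ((Δ.offDiag.card : ℕ) : ℤ) := by exact_mod_cast hQ
      _ = (κ : ℤ) ^ 2 - κ := by rw [cast1, hκ]
  have ZQ2 : ∑ L ∈ lines, ((L ∩ Δ).card : ℤ) ^ 2 ≤ (κ : ℤ) * γ + (κ : ℤ) ^ 2 - κ := by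
    have := Finset.sum_sub_distrib (s := lines)
      (f := fun L => ((L ∩ Δ).card : ℤ) ^ 2) (g := fun L => ((L ∩ Δ).card : ℤ))
    rw [this, ZA] at ZQ
    linarith
  -- lower bound for the rest
  have hrest : ∑ L ∈ lines \ B, (2 * ((L ∩ Δ).card : ℤ) - ((L ∩ Δ).card : ℤ) ^ 2)
      ≤ ∑ L ∈ lines \ B, (if Odd ((L ∩ Δ).card) then (1 : ℤ) else 0) :=
    Finset.sum_le_sum hpt
  have hrest2 : ∑ L ∈ lines \ B, (2 * ((L ∩ Δ).card : ℤ) - ((L ∩ Δ).card : ℤ) ^ 2)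
      = 2 * ((κ : ℤ) * γ - κ)
        - (∑ L ∈ lines, ((L ∩ Δ).card : ℤ) ^ 2 - ∑ i : Fin ρ, ((Δ ∩ Lb i).card : ℤ) ^ 2) := by
    rw [hsplit]
    have e1 : ∑ L ∈ lines, (2 * ((L ∩ Δ).card : ℤ) - ((L ∩ Δ).card : ℤ) ^ 2)
        = 2 * ((κ : ℤ) * γ) - ∑ L ∈ lines, ((L ∩ Δ).card : ℤ) ^ 2 := by
      rw [Finset.sum_sub_distrib, ← Finset.mul_sum, ZA]
    have e2 : ∑ L ∈ B, (2 * ((L ∩ Δ).card : ℤ) - ((L ∩ Δ).card : ℤ) ^ 2)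
        = 2 * (κ : ℤ) - ∑ i : Fin ρ, ((Δ ∩ Lb i).card : ℤ) ^ 2 := by
      rw [Finset.sum_sub_distrib, ← Finset.mul_sum, ZB1, ZB2]
    rw [e1, e2]
    ring
  have hτsplit : ∑ L ∈ lines, (if Odd ((L ∩ Δ).card) then (1 : ℤ) else 0)
      = ∑ L ∈ lines \ B, (if Odd ((L ∩ Δ).card) then (1 : ℤ) else 0)
        + ∑ L ∈ B, (if Odd ((L ∩ Δ).card) then (1 : ℤ) else 0) :=
    (Finset.sum_sdiff hB).symm
  rw [hτ, hτsplit, ZBodd]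
  linarith [hrest, hrest2, ZQ2]
end

section
/- Let N be the m×n real line-point incidence matrix of a partial geometry PaG(γ,ρ,δ) and let A be the (n+m)×(n+m) real symmetric block matrix with zero diagonal blocks and off-diagonal blocks Nᵀ and N (the adjacency matrix of the Tanner graph). Then every eigenvalue of A lies in the set {√(γρ), −√(γρ), √(γ+ρ−1−δ), −√(γ+ρ−1−δ), 0}; in particular, every eigenvalue of A other than ±√(γρ) has absolute value at most √(γ+ρ−1−δ). -/
open Matrix

/-- Let N be the line-point incidence matrix of a partial geometry PaG(γ,ρ,δ) over ℝ and
A = [[0, Nᵀ],[N, 0]] the adjacency matrix of the Tanner graph.  Then every eigenvalue of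
A lies in {√(γρ), −√(γρ), √(γ+ρ−1−δ), −√(γ+ρ−1−δ), 0}; in particular every eigenvalue
other than ±√(γρ) has absolute value at most √(γ+ρ−1−δ). -/
theorem stmt_19 {Pt : Type*} [Fintype Pt] [DecidableEq Pt]
    (γ ρ δ : ℕ) (hγ : 2 ≤ γ) (hρ : 2 ≤ ρ) (hδ : 1 ≤ δ)
    (lines : Finset (Finset Pt))
    (h1 : ∀ u v : Pt, u ≠ v → (lines.filter (fun L => u ∈ L ∧ v ∈ L)).card ≤ 1)
    (h2 : ∀ v : Pt, (lines.filter (fun L => v ∈ L)).card = γ)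
    (h3 : ∀ L ∈ lines, L.card = ρ)
    (h4 : ∀ (v : Pt), ∀ L ∈ lines, v ∉ L →
      (lines.filter (fun L' => v ∈ L' ∧ ∃ w ∈ L, w ∈ L')).card = δ)
    (N : Matrix {L : Finset Pt // L ∈ lines} Pt ℝ)
    (hN : ∀ (L : {L : Finset Pt // L ∈ lines}) (v : Pt),
      N L v = if v ∈ L.1 then 1 else 0)
    (A : Matrix (Pt ⊕ {L : Finset Pt // L ∈ lines})
                (Pt ⊕ {L : Finset Pt // L ∈ lines}) ℝ)
    (hA : A = Matrix.fromBlocks 0 Nᵀ N 0) :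
    ∀ μ : ℝ,
      (∃ x : (Pt ⊕ {L : Finset Pt // L ∈ lines}) → ℝ, x ≠ 0 ∧ A.mulVec x = μ • x) →
      ((μ = Real.sqrt ((γ : ℝ) * (ρ : ℝ)) ∨ μ = -Real.sqrt ((γ : ℝ) * (ρ : ℝ)) ∨
          μ = Real.sqrt ((γ : ℝ) + (ρ : ℝ) - 1 - (δ : ℝ)) ∨
          μ = -Real.sqrt ((γ : ℝ) + (ρ : ℝ) - 1 - (δ : ℝ)) ∨ μ = 0)
        ∧ ((μ ≠ Real.sqrt ((γ : ℝ) * (ρ : ℝ)) ∧ μ ≠ -Real.sqrt ((γ : ℝ) * (ρ : ℝ))) →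
            |μ| ≤ Real.sqrt ((γ : ℝ) + (ρ : ℝ) - 1 - (δ : ℝ)))) := by
  intro μ hex
  obtain ⟨x, hx0, hx⟩ := hex
  rw [hA] at hx
  -- entries of the Gram matrix B = Nᵀ * N count lines through pairs of points
  have hB : ∀ u w : Pt, (Nᵀ * N) u w = ∑ L ∈ lines, (if u ∈ L ∧ w ∈ L then (1:ℝ) else 0) := by
    intro u w
    rw [Matrix.mul_apply]
    rw [show (fun L : {L : Finset Pt // L ∈ lines} => Nᵀ u L * N L w)
        = fun L : {L : Finset Pt // L ∈ lines} => (if u ∈ L.1 ∧ w ∈ L.1 then (1:ℝ) else 0) from ?_]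
    · exact Finset.sum_coe_sort lines (fun L => if u ∈ L ∧ w ∈ L then (1:ℝ) else 0)
    · funext L
      rw [Matrix.transpose_apply, hN, hN]
      split_ifs <;> simp_all
  -- two distinct lines meet in at most one point
  have hint : ∀ M ∈ lines, ∀ L ∈ lines, L ≠ M →
      ∀ w w' : Pt, w ∈ M → w ∈ L → w' ∈ M → w' ∈ L → w = w' := by
    intro M hM L hL hLM w w' hwM hwL hw'M hw'L
    by_contra hne
    have h2card : 2 ≤ (lines.filter (fun K => w ∈ K ∧ w' ∈ K)).card := by
      have : {L, M} ⊆ lines.filter (fun K => w ∈ K ∧ w' ∈ K) := by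
        intro K hK
        simp only [Finset.mem_insert, Finset.mem_singleton] at hK
        rcases hK with rfl | rfl <;> simp [Finset.mem_filter, hL, hM, hwL, hw'L, hwM, hw'M]
      calc 2 = ({L, M} : Finset (Finset Pt)).card := by
              rw [Finset.card_insert_of_notMem (by simpa using hLM), Finset.card_singleton]
        _ ≤ _ := Finset.card_le_card this
    exact absurd (le_trans h2card (h1 w w' hne)) (by norm_num)
  -- key counting lemma: row sums of B over a line
  have hK1 : ∀ M ∈ lines, ∀ u : Pt,
      ∑ w ∈ M, (Nᵀ * N) u w = if u ∈ M then (γ:ℝ)+ρ-1 else (δ:ℝ) := by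
    intro M hM u
    have step : ∑ w ∈ M, (Nᵀ * N) u w
        = ∑ L ∈ lines, (if u ∈ L then ((M.filter (fun w => w ∈ L)).card : ℝ) else 0) := by
      simp only [hB]
      rw [Finset.sum_comm]
      refine Finset.sum_congr rfl fun L _ => ?_
      by_cases hu : u ∈ L
      · simp only [hu, true_and, if_true]
        exact Finset.sum_boole _ _
      · simp [hu]
    rw [step]
    by_cases huM : u ∈ M
    · rw [if_pos huM]
      rw [← Finset.add_sum_erase _ _ hM]
      have hMM : (if u ∈ M then ((M.filter (fun w => w ∈ M)).card : ℝ) else 0) = (ρ : ℝ) := by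
        rw [if_pos huM, Finset.filter_true_of_mem (fun _ h => h), h3 M hM]
      rw [hMM]
      have hrest : ∑ L ∈ lines.erase M, (if u ∈ L then ((M.filter (fun w => w ∈ L)).card : ℝ) else 0)
          = ∑ L ∈ lines.erase M, (if u ∈ L then (1:ℝ) else 0) := by
        refine Finset.sum_congr rfl fun L hL => ?_
        rcases Finset.mem_erase.mp hL with ⟨hLM, hLl⟩
        by_cases hu : u ∈ L
        · rw [if_pos hu, if_pos hu]
          have : M.filter (fun w => w ∈ L) = {u} := by
            apply Finset.eq_singleton_iff_unique_mem.mpr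
            refine ⟨Finset.mem_filter.mpr ⟨huM, hu⟩, fun w hw => ?_⟩
            rcases Finset.mem_filter.mp hw with ⟨hwM, hwL⟩
            exact hint M hM L hLl hLM w u hwM hwL huM hu
          rw [this]; norm_num
        · simp [hu]
      rw [hrest, Finset.sum_boole]
      have : (lines.erase M).filter (fun L => u ∈ L) = (lines.filter (fun L => u ∈ L)).erase M := by
        rw [Finset.filter_erase]
      rw [this, Finset.card_erase_of_mem (Finset.mem_filter.mpr ⟨hM, huM⟩), h2]
      have : (1:ℕ) ≤ γ := by omega
      push_cast [this]
      ring
    · rw [if_neg huM]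
      have hrest : ∑ L ∈ lines, (if u ∈ L then ((M.filter (fun w => w ∈ L)).card : ℝ) else 0)
          = ∑ L ∈ lines, (if u ∈ L ∧ ∃ w ∈ M, w ∈ L then (1:ℝ) else 0) := by
        refine Finset.sum_congr rfl fun L hL => ?_
        by_cases hu : u ∈ L
        · have hLM : L ≠ M := fun h => huM (h ▸ hu)
          by_cases hexx : ∃ w ∈ M, w ∈ L
          · rw [if_pos hu, if_pos ⟨hu, hexx⟩]
            obtain ⟨w, hwM, hwL⟩ := hexx
            have : M.filter (fun w => w ∈ L) = {w} := by
              apply Finset.eq_singleton_iff_unique_mem.mpr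
              refine ⟨Finset.mem_filter.mpr ⟨hwM, hwL⟩, fun w' hw' => ?_⟩
              rcases Finset.mem_filter.mp hw' with ⟨hw'M, hw'L⟩
              exact hint M hM L hL hLM w' w hw'M hw'L hwM hwL
            rw [this]; norm_num
          · rw [if_pos hu, if_neg (fun h => hexx h.2)]
            have : M.filter (fun w => w ∈ L) = ∅ := by
              apply Finset.filter_eq_empty_iff.mpr
              intro w hw hwL
              exact hexx ⟨w, hw, hwL⟩
            rw [this]; norm_num
        · simp [hu]
      rw [hrest, Finset.sum_boole, h4 u M hM huM]
  -- column sums of B are γρ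
  have hcol : ∀ v : Pt, ∑ u, (Nᵀ * N) u v = (γ:ℝ)*ρ := by
    intro v
    simp only [hB]
    rw [Finset.sum_comm]
    have : ∀ L ∈ lines, ∑ u : Pt, (if u ∈ L ∧ v ∈ L then (1:ℝ) else 0)
        = (if v ∈ L then (ρ:ℝ) else 0) := by
      intro L hL
      by_cases hv : v ∈ L
      · rw [if_pos hv]
        simp only [hv, and_true]
        rw [Finset.sum_boole]
        rw [Finset.filter_mem_eq_inter, Finset.univ_inter, h3 L hL]
      · simp [hv]
    rw [Finset.sum_congr rfl this, ← Finset.sum_filter]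
    simp only [Finset.sum_const, h2, nsmul_eq_mul]
  -- the quadratic identity B² = (γ+ρ-1-δ)B + δγJ
  have hBB : ∀ u v : Pt, ∑ w, (Nᵀ * N) u w * (Nᵀ * N) w v
      = ((γ:ℝ)+ρ-1-δ) * (Nᵀ * N) u v + (δ:ℝ)*γ := by
    intro u v
    have key : ∀ w : Pt, (Nᵀ * N) u w * (Nᵀ * N) w v
        = ∑ M ∈ lines, (if w ∈ M ∧ v ∈ M then (Nᵀ * N) u w else 0) := by
      intro w
      rw [hB w v, Finset.mul_sum]
      refine Finset.sum_congr rfl fun M _ => ?_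
      split_ifs <;> ring
    simp only [key]
    rw [Finset.sum_comm]
    have inner : ∀ M ∈ lines, ∑ w : Pt, (if w ∈ M ∧ v ∈ M then (Nᵀ * N) u w else 0)
        = (if v ∈ M then (if u ∈ M then (γ:ℝ)+ρ-1 else (δ:ℝ)) else 0) := by
      intro M hM
      by_cases hv : v ∈ M
      · rw [if_pos hv]
        simp only [hv, and_true]
        rw [show ∑ w : Pt, (if w ∈ M then (Nᵀ * N) u w else 0) = ∑ w ∈ M, (Nᵀ * N) u w by
          rw [Finset.sum_ite_mem, Finset.univ_inter]]
        exact hK1 M hM u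
      · simp [hv]
    rw [Finset.sum_congr rfl inner]
    have expand : ∀ M ∈ lines, (if v ∈ M then (if u ∈ M then (γ:ℝ)+ρ-1 else (δ:ℝ)) else 0)
        = ((γ:ℝ)+ρ-1-δ) * (if u ∈ M ∧ v ∈ M then (1:ℝ) else 0)
          + (δ:ℝ) * (if v ∈ M then (1:ℝ) else 0) := by
      intro M _
      by_cases hv : v ∈ M <;> by_cases hu : u ∈ M <;> simp [hv, hu] <;> ring
    rw [Finset.sum_congr rfl expand, Finset.sum_add_distrib, ← Finset.mul_sum, ← Finset.mul_sum]
    rw [← hB, Finset.sum_boole, h2]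
  -- now the spectral argument
  set θ : ℝ := (γ:ℝ) + ρ - 1 - δ with hθ
  set y : Pt → ℝ := x ∘ Sum.inl with hy
  set z : {L : Finset Pt // L ∈ lines} → ℝ := x ∘ Sum.inr with hz
  rw [Matrix.fromBlocks_mulVec] at hx
  have hNy : N.mulVec y = μ • z := by
    funext L
    have := congrFun hx (Sum.inr L)
    simpa [hy, hz] using this
  have hNz : Nᵀ.mulVec z = μ • y := by
    funext p
    have := congrFun hx (Sum.inl p)
    simpa [hy, hz] using this
  have hBy : (Nᵀ * N).mulVec y = (μ^2) • y := by
    rw [← Matrix.mulVec_mulVec, hNy, Matrix.mulVec_smul, hNz, smul_smul]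
    ring_nf
  have main : (μ = Real.sqrt ((γ : ℝ) * (ρ : ℝ)) ∨ μ = -Real.sqrt ((γ : ℝ) * (ρ : ℝ)) ∨
      μ = Real.sqrt θ ∨ μ = -Real.sqrt θ ∨ μ = 0) := by
    by_cases hy0 : y = 0
    · have hz0 : z ≠ 0 := by
        intro hz0
        apply hx0
        funext i
        cases i with
        | inl p => exact congrFun hy0 p
        | inr L => exact congrFun hz0 L
      have : μ • z = 0 := by rw [← hNy, hy0, Matrix.mulVec_zero]
      rcases smul_eq_zero.mp this with h | h
      · tauto
      · exact absurd h hz0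
    · set c : ℝ := ∑ p, y p with hc
      have hsum : (γ:ℝ)*ρ * c = μ^2 * c := by
        have e1 : ∑ v, ((Nᵀ * N).mulVec y) v = μ^2 * c := by
          rw [hBy]
          simp [hc, Finset.mul_sum]
        have e2 : ∑ v, ((Nᵀ * N).mulVec y) v = (γ:ℝ)*ρ * c := by
          simp only [Matrix.mulVec, dotProduct]
          rw [Finset.sum_comm]
          rw [hc, Finset.mul_sum]
          refine Finset.sum_congr rfl fun u _ => ?_
          rw [← Finset.sum_mul, hcol u]
        rw [← e1, e2]
      by_cases hcc : c = 0
      · obtain ⟨p, hp⟩ : ∃ p, y p ≠ 0 := by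
          by_contra h
          push_neg at h
          exact hy0 (funext h)
        have h5 : μ^2 * (μ^2 * y p) = θ * (μ^2 * y p) := by
          have lhs : ((Nᵀ * N).mulVec ((Nᵀ * N).mulVec y)) p = μ^2 * (μ^2 * y p) := by
            rw [hBy, Matrix.mulVec_smul, hBy]
            simp [smul_smul]
          have rhs : ((Nᵀ * N).mulVec ((Nᵀ * N).mulVec y)) p = θ * (μ^2 * y p) := by
            rw [Matrix.mulVec_mulVec]
            have e3 : (((Nᵀ*N)*(Nᵀ*N)).mulVec y) p
                = ∑ w, ((θ : ℝ) * (Nᵀ*N) p w + (δ:ℝ)*γ) * y w := by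
              simp only [Matrix.mulVec, dotProduct]
              refine Finset.sum_congr rfl fun w _ => ?_
              rw [Matrix.mul_apply, hBB p w]
            have e4 : ∑ w, ((θ : ℝ) * (Nᵀ*N) p w + (δ:ℝ)*γ) * y w
                = θ * (((Nᵀ*N).mulVec y) p) + (δ:ℝ)*γ * c := by
              simp only [Matrix.mulVec, dotProduct, hc, Finset.mul_sum]
              rw [← Finset.sum_add_distrib]
              exact Finset.sum_congr rfl fun w _ => by ring
            rw [e3, e4, hcc, hBy]
            simp [smul_smul]
          rw [← lhs, rhs]
        have : μ^2 = 0 ∨ μ^2 = θ := by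
          rcases mul_eq_zero.mp
              (show (μ^2 - θ) * (μ^2 * y p) = 0 by linear_combination h5) with h | h
          · right; linarith
          · rcases mul_eq_zero.mp h with h | h
            · left; exact h
            · exact absurd h hp
        rcases this with h | h
        · right; right; right; right; exact pow_eq_zero_iff (by norm_num) |>.mp h
        · have : Real.sqrt θ = |μ| := by rw [← h, Real.sqrt_sq_eq_abs]
          rcases abs_cases μ with ⟨ha, _⟩ | ⟨ha, _⟩
          · right; right; left; rw [this, ha]
          · right; right; right; left; rw [this, ha]; ring
      · have h : μ^2 = (γ:ℝ)*ρ := by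
          have := mul_right_cancel₀ hcc hsum
          linarith
        have : Real.sqrt ((γ:ℝ)*ρ) = |μ| := by rw [← h, Real.sqrt_sq_eq_abs]
        rcases abs_cases μ with ⟨ha, _⟩ | ⟨ha, _⟩
        · left; rw [this, ha]
        · right; left; rw [this, ha]; ring
  refine ⟨main, fun hn => ?_⟩
  rcases main with h | h | h | h | h
  · exact absurd h hn.1
  · exact absurd h hn.2
  · rw [h, abs_of_nonneg (Real.sqrt_nonneg _)]
  · rw [h, abs_neg, abs_of_nonneg (Real.sqrt_nonneg _)]
  · rw [h, abs_zero]; exact Real.sqrt_nonneg _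
end
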